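/- For every odd n ≥ 7, the word aba·(abaabbab)^{(n−5)/2}·aaba (of length 4n−13) is a reset word for the automaton 𝒜_n, i.e., it maps every state of Q_n to the sink state 0. -/

import Mathlib

/-- The two letters of a binary alphabet. -/
inductive Letter where
  | a : Letter
  | b : Letter
deriving DecidableEq

/-- The transition function of the automaton `𝒜ₙ` on the state set
`Qₙ = {0, 1, …, n-1}` (represented inside `ℕ`):
`δ(0,a)=δ(0,b)=0`; `δ(1,a)=0`, `δ(2,a)=4`, `δ(3,a)=2`, `δ(4,a)=3`;
`δ(1,b)=3`, `δ(2,b)=1`, `δ(3,b)=2`; and for `4 ≤ j ≤ n-1`: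
`δ(j,a) = j-1` if `j ≥ 6` is even, `δ(j,a) = j+1` if `j ≥ 5` is odd and
`j ≠ n-1`, `δ(j,a) = j` if `j = n-1` is odd; `δ(j,b) = j-1` if `j ≥ 5` is odd,
`δ(j,b) = j+1` if `j ≥ 4` is even and `j ≠ n-1`, `δ(j,b) = j` if `j = n-1`
is even. -/
def anDelta (n : ℕ) (q : ℕ) (ℓ : Letter) : ℕ :=
  match q, ℓ with
  | 0, _ => 0
  | 1, Letter.a => 0
  | 1, Letter.b => 3
  | 2, Letter.a => 4
  | 2, Letter.b => 1
  | 3, _ => 2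
  | 4, Letter.a => 3
  | j, Letter.a => if j % 2 = 1 then (if j = n - 1 then j else j + 1) else j - 1
  | j, Letter.b => if j % 2 = 0 then (if j = n - 1 then j else j + 1) else j - 1

/-- Extension of the transition function of `𝒜ₙ` to words:
`δ(q, uv) = δ(δ(q, u), v)`. -/
def anStar (n : ℕ) (q : ℕ) (w : List Letter) : ℕ :=
  w.foldl (anDelta n) q

namespace AnReset
open Letter

/-- The inner block `abaabbab`. -/
def blockB : List Letter := [a, b, a, a, b, b, a, b]

lemma anStar_cons (n q : ℕ) (l : Letter) (w : List Letter) :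
    anStar n q (l :: w) = anStar n (anDelta n q l) w := rfl

lemma anStar_nil (n q : ℕ) : anStar n q [] = q := rfl

lemma da5 (n m : ℕ) : anDelta n (m+5) a =
    if (m+5) % 2 = 1 then (if m+5 = n-1 then m+5 else m+6) else m+4 := rfl

lemma db5 (n m : ℕ) : anDelta n (m+5) b =
    if (m+5) % 2 = 0 then (if m+5 = n-1 then m+5 else m+6) else m+4 := rfl

section
variable {n : ℕ} (hn : 7 ≤ n) (hodd : n % 2 = 1)

include hodd in
lemma da_odd {q : ℕ} (h5 : 5 ≤ q) (ho : q % 2 = 1) : anDelta n q a = q + 1 := by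
  obtain ⟨m, rfl⟩ := Nat.exists_eq_add_of_le' h5
  rw [da5, if_pos ho, if_neg (by omega)]

lemma da_even {q : ℕ} (h6 : 6 ≤ q) (he : q % 2 = 0) : anDelta n q a = q - 1 := by
  obtain ⟨m, rfl⟩ : ∃ m, q = m + 5 := ⟨q - 5, by omega⟩
  rw [da5, if_neg (by omega)] <;> omega

lemma db_odd {q : ℕ} (h5 : 5 ≤ q) (ho : q % 2 = 1) : anDelta n q b = q - 1 := by
  obtain ⟨m, rfl⟩ := Nat.exists_eq_add_of_le' h5
  rw [db5, if_neg (by omega)] <;> omega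

lemma db_even {q : ℕ} (h6 : 6 ≤ q) (he : q % 2 = 0) (hne : q ≠ n - 1) :
    anDelta n q b = q + 1 := by
  obtain ⟨m, rfl⟩ : ∃ m, q = m + 5 := ⟨q - 5, by omega⟩
  rw [db5, if_pos he, if_neg hne]

lemma db_even_top {q : ℕ} (h6 : 6 ≤ q) (he : q % 2 = 0) (heq : q = n - 1) :
    anDelta n q b = q := by
  obtain ⟨m, rfl⟩ : ∃ m, q = m + 5 := ⟨q - 5, by omega⟩
  rw [db5, if_pos he, if_pos heq]

include hodd in
lemma B_even (m : ℕ) (hm : m % 2 = 0) (hlt : m + 9 ≤ n) :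
    anStar n (m+8) blockB = m + 4 := by
  have e1 : anDelta n (m+8) a = m+7 := by rw [da_even (by omega) (by omega)] <;> omega
  have e2 : anDelta n (m+7) b = m+6 := by rw [db_odd (by omega) (by omega)] <;> omega
  have e3 : anDelta n (m+6) a = m+5 := by rw [da_even (by omega) (by omega)] <;> omega
  have e4 : anDelta n (m+5) a = m+6 := da_odd hodd (by omega) (by omega)
  have e5 : anDelta n (m+6) b = m+7 := db_even (by omega) (by omega) (by omega)
  have e6 : anDelta n (m+5) b = m+4 := by rw [db_odd (by omega) (by omega)] <;> omega
  simp only [blockB, anStar_cons, e1, e2, e3, e4, e5, e6, anStar_nil]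

include hodd in
lemma B_odd_low (m : ℕ) (hm : m % 2 = 0) (hlt : m + 11 ≤ n) :
    anStar n (m+5) blockB = m + 9 := by
  have e1 : anDelta n (m+5) a = m+6 := da_odd hodd (by omega) (by omega)
  have e2 : anDelta n (m+6) b = m+7 := db_even (by omega) (by omega) (by omega)
  have e3 : anDelta n (m+7) a = m+8 := da_odd hodd (by omega) (by omega)
  have e4 : anDelta n (m+8) a = m+7 := by rw [da_even (by omega) (by omega)] <;> omega
  have e5 : anDelta n (m+7) b = m+6 := by rw [db_odd (by omega) (by omega)] <;> omega
  have e6 : anDelta n (m+8) b = m+9 := db_even (by omega) (by omega) (by omega)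
  simp only [blockB, anStar_cons, e1, e2, e3, e4, e5, e6, anStar_nil]

include hodd in
lemma B_top3 (m : ℕ) (hm : m % 2 = 0) (hn9 : m + 9 = n) :
    anStar n (m+5) blockB = m + 8 := by
  have e1 : anDelta n (m+5) a = m+6 := da_odd hodd (by omega) (by omega)
  have e2 : anDelta n (m+6) b = m+7 := db_even (by omega) (by omega) (by omega)
  have e3 : anDelta n (m+7) a = m+8 := da_odd hodd (by omega) (by omega)
  have e4 : anDelta n (m+8) a = m+7 := by rw [da_even (by omega) (by omega)] <;> omega
  have e5 : anDelta n (m+7) b = m+6 := by rw [db_odd (by omega) (by omega)] <;> omega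
  have e6 : anDelta n (m+8) b = m+8 := db_even_top (by omega) (by omega) (by omega)
  simp only [blockB, anStar_cons, e1, e2, e3, e4, e5, e6, anStar_nil]

include hodd in
lemma B_top1 (m : ℕ) (hm : m % 2 = 0) (hn7 : m + 7 = n) :
    anStar n (m+5) blockB = m + 4 := by
  have e1 : anDelta n (m+5) a = m+6 := da_odd hodd (by omega) (by omega)
  have e2 : anDelta n (m+6) b = m+6 := db_even_top (by omega) (by omega) (by omega)
  have e3 : anDelta n (m+6) a = m+5 := by rw [da_even (by omega) (by omega)] <;> omega
  have e4 : anDelta n (m+5) a = m+6 := da_odd hodd (by omega) (by omega)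
  have e5 : anDelta n (m+5) b = m+4 := by rw [db_odd (by omega) (by omega)] <;> omega
  simp only [blockB, anStar_cons, e1, e2, e3, e4, e5, anStar_nil]

include hn hodd in
lemma B_six : anStar n 6 blockB = 1 := by
  have e1 : anDelta n 6 a = 5 := by rw [da_even (by omega) (by omega)] <;> omega
  have e2 : anDelta n 5 b = 4 := by rw [db_odd (by omega) (by omega)] <;> omega
  simp only [blockB, anStar_cons, e1, e2, anStar_nil]
  rfl

include hn hodd in
lemma delta_lt {q : ℕ} (hq : q < n) (l : Letter) : anDelta n q l < n := by
  rcases Nat.lt_or_ge q 5 with h | h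
  · interval_cases q <;> cases l <;> simp only [anDelta] <;>
      first | omega | (split <;> (try split) <;> omega)
  · obtain ⟨m, rfl⟩ := Nat.exists_eq_add_of_le' h
    cases l
    · rw [da5]
      split
      · split <;> omega
      · omega
    · rw [db5]
      split
      · split <;> omega
      · omega

lemma not_one (q : ℕ) : anDelta n q a ≠ 1 := by
  rcases Nat.lt_or_ge q 5 with h | h
  · interval_cases q <;> simp [anDelta]
  · obtain ⟨m, rfl⟩ := Nat.exists_eq_add_of_le' h
    rw [da5]
    split
    · split <;> omega
    · omega

include hn in
lemma not_three (q : ℕ) (h1 : q ≠ 1) : anDelta n q b ≠ 3 := by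
  rcases Nat.lt_or_ge q 5 with h | h
  · interval_cases q <;> simp_all [anDelta] <;> split <;> omega
  · obtain ⟨m, rfl⟩ := Nat.exists_eq_add_of_le' h
    rw [db5]
    split
    · split <;> omega
    · omega

lemma not_two (q : ℕ) (h3 : q ≠ 3) : anDelta n q a ≠ 2 := by
  rcases Nat.lt_or_ge q 5 with h | h
  · interval_cases q <;> simp_all [anDelta]
  · obtain ⟨m, rfl⟩ := Nat.exists_eq_add_of_le' h
    rw [da5]
    split
    · split <;> omega
    · omega

end

/-- The invariant describing the possible states after `aba · B^t`. -/
def inv (n t q : ℕ) : Prop :=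
  q = 0 ∨ q = 1 ∨ q = 4 ∨ (t = 0 ∧ q = 3) ∨
  (q % 2 = 0 ∧ 6 ≤ q ∧ q ≤ 4*t+4 ∧ q + 4*t + 6 ≤ 2*n) ∨
  (4*t+5 ≤ q ∧ q < n)

section
variable {n : ℕ} (hn : 7 ≤ n) (hodd : n % 2 = 1)

include hn hodd in
lemma base (q : ℕ) (hq : q < n) : inv n 0 (anStar n q [a, b, a]) := by
  have l1 := delta_lt hn hodd hq a
  have l2 := delta_lt hn hodd l1 b
  have l3 := delta_lt hn hodd l2 a
  have n1 := not_one (n := n) q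
  have n3 := not_three hn (anDelta n q a) n1
  have n2 := not_two (n := n) (anDelta n (anDelta n q a) b) n3
  show inv n 0 (anDelta n (anDelta n (anDelta n q a) b) a)
  unfold inv; omega

include hn hodd in
lemma step (t q : ℕ) (h : inv n t q) : inv n (t+1) (anStar n q blockB) := by
  have hB0 : anStar n 0 blockB = 0 := by simp [anStar, blockB, anDelta]
  have hB1 : anStar n 1 blockB = 0 := by simp [anStar, blockB, anDelta]
  have hB3 : anStar n 3 blockB = 0 := by simp [anStar, blockB, anDelta]
  have hB4 : anStar n 4 blockB = 0 := by simp [anStar, blockB, anDelta]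
  rcases h with rfl | rfl | rfl | ⟨-, rfl⟩ | ⟨hpar, h6, hub, hub2⟩ | ⟨hlo, hhi⟩
  · rw [hB0]; unfold inv; omega
  · rw [hB1]; unfold inv; omega
  · rw [hB4]; unfold inv; omega
  · rw [hB3]; unfold inv; omega
  · -- even part: 6 ≤ q ≤ 4t+4, q + 4t + 6 ≤ 2n
    rcases eq_or_lt_of_le h6 with h6' | h8
    · rw [← h6', B_six hn hodd]; unfold inv; omega
    · obtain ⟨m, rfl⟩ : ∃ m, q = m + 8 := ⟨q - 8, by omega⟩
      rw [B_even hodd m (by omega) (by omega)]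
      unfold inv; omega
  · -- tail: 4t+5 ≤ q < n
    rcases Nat.even_or_odd q with hq | hq
    · rw [Nat.even_iff] at hq
      rcases eq_or_lt_of_le (show 6 ≤ q by omega) with h6' | h8
      · rw [← h6', B_six hn hodd]; unfold inv; omega
      · obtain ⟨m, rfl⟩ : ∃ m, q = m + 8 := ⟨q - 8, by omega⟩
        rw [B_even hodd m (by omega) (by omega)]
        unfold inv; omega
    · rw [Nat.odd_iff] at hq
      obtain ⟨m, rfl⟩ : ∃ m, q = m + 5 := ⟨q - 5, by omega⟩
      rcases Nat.lt_or_ge (m + 11) (n + 1) with hl | hl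
      · rw [B_odd_low hodd m (by omega) (by omega)]; unfold inv; omega
      · -- q odd, q ≥ n - 4 : q = n-4 or q = n-2
        rcases (show m + 9 = n ∨ m + 7 = n by omega) with h9 | h7
        · rw [B_top3 hodd m (by omega) h9]; unfold inv; omega
        · rw [B_top1 hodd m (by omega) h7]; unfold inv; omega

include hn hodd in
lemma iter (t q : ℕ) (hq : q < n) :
    inv n t (anStar n (anStar n q [a, b, a]) (List.replicate t blockB).flatten) := by
  induction t with
  | zero => simpa [anStar_nil] using base hn hodd q hq
  | succ t ih =>
      rw [List.replicate_succ', List.flatten_append]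
      show inv n (t+1) (anStar n _ (_ ++ (blockB ++ [])))
      rw [List.append_nil]
      unfold anStar
      rw [List.foldl_append]
      exact step hn hodd t _ ih

end

end AnReset

open AnReset Letter in
/-- For every odd `n ≥ 7`, the word `aba · (abaabbab)^((n-5)/2) · aaba`
(of length `4n - 13`) is a reset word for `𝒜ₙ`: it maps every state of `Qₙ`
to the sink state `0`. -/
theorem an_reset_word_odd (n : ℕ) (hn : 7 ≤ n) (hodd : Odd n) :
    ∀ w : List Letter,
      w = [Letter.a, Letter.b, Letter.a] ++
          (List.replicate ((n - 5) / 2)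
            [Letter.a, Letter.b, Letter.a, Letter.a,
             Letter.b, Letter.b, Letter.a, Letter.b]).flatten ++
          [Letter.a, Letter.a, Letter.b, Letter.a] →
      w.length = 4 * n - 13 ∧ ∀ q : ℕ, q < n → anStar n q w = 0 := by
  have hodd' : n % 2 = 1 := Nat.odd_iff.mp hodd
  intro w hw
  subst hw
  constructor
  · simp only [List.length_append, List.length_flatten, List.map_replicate,
      List.sum_replicate, smul_eq_mul, List.length_cons, List.length_nil]
    omega
  · intro q hq
    have key := iter hn hodd' ((n - 5) / 2) q hq
    have hfin : ∀ p, inv n ((n - 5) / 2) p → (p = 0 ∨ p = 1 ∨ p = 4) := by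
      intro p hp; unfold inv at hp; omega
    have hB : ([Letter.a, Letter.b, Letter.a, Letter.a,
             Letter.b, Letter.b, Letter.a, Letter.b] : List Letter) = blockB := rfl
    rw [hB]
    unfold anStar at key ⊢
    rw [List.foldl_append, List.foldl_append]
    rcases hfin _ key with h | h | h <;> rw [h] <;> simp [anDelta]
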